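/- Let R : ℝ → SO(3) be differentiable with Ṙ(t) = R(t)S(ω(t)) for a continuous ω : ℝ → ℝ³, and let R_d ∈ SO(3) be constant. Then d/dt Ψ(R(t), R_d) = ⟨ω(t), χ(R(t), R_d)⟩, where Ψ(R, R_d) = (1/2)Tr(I − R_dᵀR) and χ(R, R_d) = (1/2)S⁻¹(R_dᵀR − RᵀR_d). -/
import Mathlib

open Matrix

attribute [local instance] Matrix.normedAddCommGroup Matrix.normedSpace

/-- The hat map. -/
def hatMap (ω : Fin 3 → ℝ) : Matrix (Fin 3) (Fin 3) ℝ :=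
  !![0, -ω 2, ω 1; ω 2, 0, -ω 0; -ω 1, ω 0, 0]

/-- The inverse of the hat map on skew-symmetric matrices. -/
def hatMapInv (A : Matrix (Fin 3) (Fin 3) ℝ) : Fin 3 → ℝ :=
  ![A 2 1, A 0 2, A 1 0]

/-- `Ψ(R, R_d) = (1/2) Tr(I − R_dᵀ R)`. -/
noncomputable def Psi (R Rd : Matrix (Fin 3) (Fin 3) ℝ) : ℝ :=
  (1 / 2) * (1 - Rd.transpose * R).trace

/-- `χ(R, R_d) = (1/2) S⁻¹(R_dᵀ R − Rᵀ R_d)`. -/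
noncomputable def chi (R Rd : Matrix (Fin 3) (Fin 3) ℝ) : Fin 3 → ℝ :=
  (1 / 2 : ℝ) • hatMapInv (Rd.transpose * R - R.transpose * Rd)

lemma key_alg (M : Matrix (Fin 3) (Fin 3) ℝ) (v : Fin 3 → ℝ) :
    v ⬝ᵥ ((1 / 2 : ℝ) • hatMapInv (M - M.transpose)) =
      -(1 / 2) * (M * hatMap v).trace := by
  simp [hatMap, hatMapInv, dotProduct, Matrix.trace, Matrix.diag, Matrix.mul_apply,
    Fin.sum_univ_three, Matrix.sub_apply, Matrix.transpose_apply]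
  ring

/-- If `R : ℝ → SO(3)` satisfies `Ṙ(t) = R(t) S(ω(t))` for continuous `ω` and `R_d ∈ SO(3)` is
constant, then `d/dt Ψ(R(t), R_d) = ⟨ω(t), χ(R(t), R_d)⟩`. -/
theorem deriv_Psi (R : ℝ → Matrix (Fin 3) (Fin 3) ℝ) (ω : ℝ → Fin 3 → ℝ)
    (Rd : Matrix (Fin 3) (Fin 3) ℝ)
    (hRSO : ∀ t, (R t).transpose * R t = 1 ∧ (R t).det = 1)
    (hRd : Rd.transpose * Rd = 1) (hRddet : Rd.det = 1)
    (hω : Continuous ω)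
    (hR : ∀ t, HasDerivAt R (R t * hatMap (ω t)) t) :
    ∀ t, HasDerivAt (fun s => Psi (R s) Rd) (ω t ⬝ᵥ chi (R t) Rd) t := by
  intro t
  set l : Matrix (Fin 3) (Fin 3) ℝ →ₗ[ℝ] ℝ :=
    (Matrix.traceLinearMap (Fin 3) ℝ ℝ).comp (LinearMap.mulLeft ℝ Rd.transpose) with hl
  have hlin : HasDerivAt (fun s => l (R s)) (l (R t * hatMap (ω t))) t :=
    (l.toContinuousLinearMap.hasFDerivAt.comp_hasDerivAt t (hR t))
  have hderiv : HasDerivAt (fun s => Psi (R s) Rd)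
      ((1 / 2) * -l (R t * hatMap (ω t))) t := by
    have : HasDerivAt (fun s => (1 / 2 : ℝ) * (((1 : Matrix (Fin 3) (Fin 3) ℝ).trace) - l (R s)))
        ((1 / 2) * -l (R t * hatMap (ω t))) t :=
      ((hlin.const_sub _).const_mul _)
    convert this using 2 with s
    simp [Psi, hl, Matrix.trace_sub]
  convert hderiv using 1
  have hM : Rd.transpose * R t - (R t).transpose * Rd =
      (Rd.transpose * R t) - (Rd.transpose * R t).transpose := by
    simp [Matrix.transpose_mul]
  have := key_alg (Rd.transpose * R t) (ω t)
  simp only [chi, hM]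
  rw [this]
  simp [hl, Matrix.mul_assoc]
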